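/- Energy-consumption dominance of right-shift schedules: let s be a baseline schedule with permutation π, Δ ∈ {0,…,Δmax}^n a scenario, R = R(s,Δ) the realised schedule, and Ŝ = RS(s,q,R_{π(q)}) the right-shift schedule fixing operation π(q) at its realised start. Then for every metering interval M = [m,e] with lenint([m,e],[R_{π(q)}, R_{π(q)}+p_{π(q)}]) > 0, the total energy consumed in M by operations π(1),…,π(q) under R is at most that under Ŝ: Σ_{k=1}^{q} lenint([m,e],[R_{π(k)}, R_{π(k)}+p_{π(k)}])·P_{π(k)} ≤ Σ_{k=1}^{q} lenint([m,e],[Ŝ_{π(k)}, Ŝ_{π(k)}+p_{π(k)}])·P_{π(k)}. -/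

import Mathlib

/-- Length of the intersection of integer intervals [a1,b1] and [a2,b2]. -/
def lenint (a1 b1 a2 b2 : ℤ) : ℤ := max 0 (min b1 b2 - max a1 a2)

/-- Realised schedule: position-indexed recursive definition.
`p` processing times (operation-indexed), `π` permutation of operations,
`s` baseline start times (operation-indexed), `Δ` deviations (operation-indexed). -/
def realised (p : ℕ → ℤ) (π : Equiv.Perm ℕ) (s Δ : ℕ → ℤ) : ℕ → ℤ
  | 0 => s (π 0) + Δ (π 0)
  | k + 1 => max (s (π (k + 1))) (realised p π s Δ k + p (π k)) + Δ (π (k + 1))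

/-- Latest start time schedule (position-indexed). -/
def latest (p : ℕ → ℤ) (π : Equiv.Perm ℕ) (s : ℕ → ℤ) (Δmax : ℤ) : ℕ → ℤ :=
  realised p π s (fun _ => Δmax)

/-- A scenario: all deviations in {0,…,Δmax}. -/
def IsScenario (Δmax : ℤ) (Δ : ℕ → ℤ) : Prop := ∀ j, 0 ≤ Δ j ∧ Δ j ≤ Δmax

/-- Auxiliary function for the right-shift schedule: `j` is the distance from
position `q`, i.e. the value at position `q - j`. -/
def rsAux (p : ℕ → ℤ) (π : Equiv.Perm ℕ) (L : ℕ → ℤ) (q : ℕ) (t : ℤ) : ℕ → ℤ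
  | 0 => t
  | j + 1 => min (L (q - (j + 1))) (rsAux p π L q t j - p (π (q - (j + 1))))

/-- Right-shift schedule (position-indexed, meaningful for positions `k ≤ q`). -/
def rightShift (p : ℕ → ℤ) (π : Equiv.Perm ℕ) (L : ℕ → ℤ) (q : ℕ) (t : ℤ) (k : ℕ) : ℤ :=
  rsAux p π L q t (q - k)


/-!
Under the realised schedule `R` every operation starts no later than in the latest schedule and
precedence is respected, while the right-shift schedule `Ŝ` is the pointwise largest schedule with
these two properties that starts `π(q)` at `R_{π(q)}`. Hence `R_{π(k)} ≤ Ŝ_{π(k)}` for `k ≤ q`, and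
for `k < q` the shifted operation still ends by `R_{π(q)}`, which lies before `e` because `π(q)`
overlaps `[m, e]`. Shifting an interval of fixed length to the right, as long as it ends by `e`, can
only increase its overlap with `[m, e]`.
-/

lemma lt_of_lenint_pos {a₁ b₁ a₂ b₂ : ℤ} (h : 0 < lenint a₁ b₁ a₂ b₂) : a₂ < b₁ := by
  unfold lenint at h; omega

lemma lenint_le_lenint_of_le_of_add_le {m e a a' d : ℤ} (ha : a ≤ a') (hd : a' + d ≤ e) :
    lenint m e a (a + d) ≤ lenint m e a' (a' + d) := by
  unfold lenint; omega

section Realised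

variable (p : ℕ → ℤ) (π : Equiv.Perm ℕ) (s : ℕ → ℤ)

lemma realised_mono {Δ Δ' : ℕ → ℤ} (h : ∀ j, Δ j ≤ Δ' j) (k : ℕ) :
    realised p π s Δ k ≤ realised p π s Δ' k := by
  induction k with
  | zero => exact add_le_add_right (h _) _
  | succ k ih => exact add_le_add (max_le_max le_rfl (add_le_add_left ih _)) (h _)

lemma realised_le_latest {Δ : ℕ → ℤ} {Δmax : ℤ} (hΔ : ∀ j, Δ j ≤ Δmax) (k : ℕ) :
    realised p π s Δ k ≤ latest p π s Δmax k :=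
  realised_mono p π s hΔ k

lemma realised_add_le_realised_succ {Δ : ℕ → ℤ} (hΔ : ∀ j, 0 ≤ Δ j) (k : ℕ) :
    realised p π s Δ k + p (π k) ≤ realised p π s Δ (k + 1) := by
  have := le_max_right (s (π (k + 1))) (realised p π s Δ k + p (π k))
  have := hΔ (π (k + 1))
  simp only [realised]
  omega

end Realised

section RightShift

variable (p : ℕ → ℤ) (π : Equiv.Perm ℕ) (L : ℕ → ℤ) (q : ℕ) (t : ℤ)

@[simp]
lemma rightShift_self : rightShift p π L q t q = t := by
  simp [rightShift, rsAux]

lemma rightShift_of_lt {k : ℕ} (hk : k < q) :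
    rightShift p π L q t k = min (L k) (rightShift p π L q t (k + 1) - p (π k)) := by
  have h₁ : q - k = q - (k + 1) + 1 := by omega
  have h₂ : q - (q - (k + 1) + 1) = k := by omega
  rw [rightShift, h₁, rsAux, h₂, rightShift]

lemma rightShift_add_le_succ {k : ℕ} (hk : k < q) :
    rightShift p π L q t k + p (π k) ≤ rightShift p π L q t (k + 1) := by
  rw [rightShift_of_lt p π L q t hk]
  have := min_le_right (L k) (rightShift p π L q t (k + 1) - p (π k))
  omega

lemma rightShift_le {k : ℕ} (hp : ∀ j, 0 ≤ p j) (hk : k ≤ q) : rightShift p π L q t k ≤ t := by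
  induction hk using Nat.decreasingInduction with
  | self => simp
  | of_succ k hk ih =>
    have := rightShift_add_le_succ p π L q t hk
    have := hp (π k)
    omega

lemma rightShift_add_le {k : ℕ} (hp : ∀ j, 0 ≤ p j) (hk : k < q) :
    rightShift p π L q t k + p (π k) ≤ t :=
  (rightShift_add_le_succ p π L q t hk).trans (rightShift_le p π L q t hp hk)

lemma le_rightShift {R : ℕ → ℤ} (hL : ∀ k, R k ≤ L k) (hR : ∀ k, R k + p (π k) ≤ R (k + 1))
    {k : ℕ} (hk : k ≤ q) : R k ≤ rightShift p π L q (R q) k := by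
  induction hk using Nat.decreasingInduction with
  | self => simp
  | of_succ k hk ih =>
    rw [rightShift_of_lt p π L q _ hk]
    exact le_min (hL k) (by linarith [hR k])

end RightShift

lemma lenint_realised_le_lenint_rightShift (p : ℕ → ℤ) (π : Equiv.Perm ℕ) (s Δ : ℕ → ℤ)
    (Δmax : ℤ) (q : ℕ) (m e : ℤ) (hp : ∀ j, 0 ≤ p j) (hΔ : IsScenario Δmax Δ)
    (hq : realised p π s Δ q < e) {k : ℕ} (hk : k ≤ q) :
    lenint m e (realised p π s Δ k) (realised p π s Δ k + p (π k)) ≤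
      lenint m e (rightShift p π (latest p π s Δmax) q (realised p π s Δ q) k)
        (rightShift p π (latest p π s Δmax) q (realised p π s Δ q) k + p (π k)) := by
  obtain rfl | hkq := hk.eq_or_lt
  · simp
  · refine lenint_le_lenint_of_le_of_add_le ?_ ?_
    · exact le_rightShift p π _ q (realised_le_latest p π s fun j => (hΔ j).2)
        (realised_add_le_realised_succ p π s fun j => (hΔ j).1) hk
    · linarith [rightShift_add_le p π (latest p π s Δmax) q (realised p π s Δ q) hp hkq]

theorem energy_dominance_rightShift_general (p : ℕ → ℤ) (P : ℕ → ℝ)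
    (π : Equiv.Perm ℕ) (s Δ : ℕ → ℤ) (Δmax : ℤ) (q : ℕ) (m e : ℤ)
    (hp : ∀ j, 0 < p j) (hP : ∀ j, 0 ≤ P j)
    (hΔ : IsScenario Δmax Δ)
    (hint : 0 < lenint m e (realised p π s Δ q)
        (realised p π s Δ q + p (π q))) :
    ∑ k ∈ Finset.range (q + 1),
        (lenint m e (realised p π s Δ k) (realised p π s Δ k + p (π k)) : ℝ)
          * P (π k) ≤
    ∑ k ∈ Finset.range (q + 1),
        (lenint m e
            (rightShift p π (latest p π s Δmax) q (realised p π s Δ q) k)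
            (rightShift p π (latest p π s Δmax) q (realised p π s Δ q) k
              + p (π k)) : ℝ) * P (π k) := by
  refine Finset.sum_le_sum fun k hk => mul_le_mul_of_nonneg_right ?_ (hP _)
  exact_mod_cast lenint_realised_le_lenint_rightShift p π s Δ Δmax q m e (fun j => (hp j).le) hΔ
    (lt_of_lenint_pos hint) (Nat.lt_succ_iff.mp (Finset.mem_range.mp hk))

theorem energy_dominance_rightShift (p : ℕ → ℤ) (P : ℕ → ℝ)
    (π : Equiv.Perm ℕ) (s Δ : ℕ → ℤ) (Δmax : ℤ) (q : ℕ) (m e : ℤ)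
    (hp : ∀ j, 0 < p j) (hP : ∀ j, 0 ≤ P j) (hΔmax : 0 ≤ Δmax)
    (hΔ : IsScenario Δmax Δ) (hme : m < e)
    (hover : ∀ k, s (π k) + p (π k) ≤ s (π (k + 1)))
    (hint : 0 < lenint m e (realised p π s Δ q)
        (realised p π s Δ q + p (π q))) :
    ∑ k ∈ Finset.range (q + 1),
        (lenint m e (realised p π s Δ k) (realised p π s Δ k + p (π k)) : ℝ)
          * P (π k) ≤
    ∑ k ∈ Finset.range (q + 1),
        (lenint m e
            (rightShift p π (latest p π s Δmax) q (realised p π s Δ q) k)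
            (rightShift p π (latest p π s Δmax) q (realised p π s Δ q) k
              + p (π k)) : ℝ) * P (π k) :=
  energy_dominance_rightShift_general p P π s Δ Δmax q m e hp hP hΔ hint
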